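/- If a finite graph G is the disjoint union of graphs G₁ and G₂, then the graph curve matroid of G is the direct sum of the graph curve matroids of G₁ and G₂: M_G = M_{G₁} ⊕ M_{G₂}. -/

import Mathlib

/-- A finite undirected multigraph on vertex type `V` with edge type `E`:
each edge has an unordered pair of endpoints (possibly a loop). -/
structure Multigraph (V E : Type*) where
  ends : E → Sym2 V

namespace Multigraph

variable {V E : Type*} (G : Multigraph V E)

/-- `δ(A)`: the set of edges incident to at least one vertex of `A`. -/
def inc (A : Set V) : Set E := {e | ∃ v ∈ A, v ∈ G.ends e}

/-- Number of connected components of the spanning subgraph of `G`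
with edge set `B` (on the full vertex set `V`). -/
noncomputable def numComponentsEdges (B : Set E) : ℕ :=
  Nat.card (Quot (fun u v : V => ∃ e ∈ B, G.ends e = s(u, v)))

/-- Number of connected components `ω(S)` of the subgraph of `G` induced on `S`. -/
noncomputable def numComponentsSub (S : Set V) : ℕ :=
  Nat.card (Quot (fun x y : S => ∃ e, G.ends e = s(x.1, y.1)))

/-- Rank function of the cycle (graphic) matroid of `G`:
`r(B) = |V| - (number of components of (V, B))`. -/
noncomputable def cycleRank (B : Set E) : ℕ :=
  Nat.card V - G.numComponentsEdges B

/-- Rank function `r*` of the bond (cographic) matroid of `G`: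
`r*(B) = |B| + r(E - B) - r(E)`. -/
noncomputable def bondRank (B : Set E) : ℕ :=
  B.ncard + G.cycleRank Bᶜ - G.cycleRank Set.univ

/-- `G` is connected. -/
def Connected : Prop := G.numComponentsEdges Set.univ = 1

/-- `G` is 2-edge-connected: it is connected and deleting any single edge
leaves it connected. -/
def TwoEdgeConnected : Prop :=
  G.Connected ∧ ∀ e : E, G.numComponentsEdges {e}ᶜ = 1

/-- `G` is 2-vertex-connected: it is connected and deleting any single vertex
leaves it connected. -/
def TwoVertexConnected : Prop :=
  G.Connected ∧ ∀ v : V, G.numComponentsSub {v}ᶜ = 1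

/-- `G` has no loops. -/
def Loopless : Prop := ∀ e : E, ¬ (G.ends e).IsDiag

open Classical in
/-- The degree of a vertex, with loops counting twice. -/
noncomputable def degree [Fintype E] (v : V) : ℕ :=
  ∑ e : E, (if G.ends e = s(v, v) then 2 else if v ∈ G.ends e then 1 else 0)

/-- `G` is trivalent: every vertex has degree `3`. -/
def Trivalent [Fintype E] : Prop := ∀ v : V, G.degree v = 3

/-- `A ⊆ V` is the vertex set of a cycle `v₁, …, vₙ, v₁` of `G`: there are
pairwise distinct vertices `f 0, …, f (n-1)` with range `A` and pairwise
distinct edges joining cyclically consecutive vertices. -/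
def IsCycleSet (A : Set V) : Prop :=
  ∃ n : ℕ, 0 < n ∧ ∃ f : ZMod n → V, Function.Injective f ∧ Set.range f = A ∧
    ∃ e : ZMod n → E, Function.Injective e ∧ ∀ i, G.ends (e i) = s(f i, f (i + 1))

/-- The subgraph induced on `A` contains a cycle. -/
def Cyclic (A : Set V) : Prop := ∃ C ⊆ A, G.IsCycleSet C

/-- The subgraph induced on `A` is acyclic (a forest). -/
def Acyclic (A : Set V) : Prop := ¬ G.Cyclic A

/-- `A` is a circuit of the graph curve matroid `M_G`: `A` is nonempty,
`r*(δ(A)) ≤ |A|`, and no proper nonempty subset `A'` satisfies `r*(δ(A')) ≤ |A'|`. -/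
noncomputable def IsCircuitMG (A : Set V) : Prop :=
  A.Nonempty ∧ G.bondRank (G.inc A) ≤ A.ncard ∧
    ∀ A' : Set V, A' ⊂ A → A'.Nonempty → A'.ncard < G.bondRank (G.inc A')

/-- `A` is dependent in the graph curve matroid `M_G`, i.e. contains a circuit. -/
noncomputable def DepMG (A : Set V) : Prop := ∃ C ⊆ A, G.IsCircuitMG C

/-- `A` is independent in the graph curve matroid `M_G`. -/
noncomputable def IndepMG (A : Set V) : Prop := ¬ G.DepMG A

/-- The rank function of the graph curve matroid `M_G`:
the maximal cardinality of an independent subset. -/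
noncomputable def rankMG (A : Set V) : ℕ :=
  sSup {n | ∃ I ⊆ A, G.IndepMG I ∧ I.ncard = n}

/-- `B` is a basis of the graph curve matroid `M_G`:
a maximal independent set. -/
noncomputable def IsBasisMG (B : Set V) : Prop :=
  G.IndepMG B ∧ ∀ I : Set V, G.IndepMG I → B ⊆ I → I = B

end Multigraph

/-- The disjoint union of two multigraphs. -/
def Multigraph.disjUnion {V₁ E₁ V₂ E₂ : Type*}
    (G₁ : Multigraph V₁ E₁) (G₂ : Multigraph V₂ E₂) :
    Multigraph (V₁ ⊕ V₂) (E₁ ⊕ E₂) :=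
  ⟨Sum.elim (fun e => (G₁.ends e).map Sum.inl) (fun e => (G₂.ends e).map Sum.inr)⟩

/-! Components of a disjoint union are those of the two sides, so the cycle rank, and hence the
bond rank, is additive; for the bond rank `r*(B) = |B| + r(Bᶜ) - r(E)` this needs
`r(E) ≤ |B| + r(Bᶜ)`, i.e. that adding one edge merges at most two components. Thus
`r*(δ(A)) = r*₁(δ(A₁)) + r*₂(δ(A₂))`. A circuit `C` of `M_G` meeting both sides would have
`|Cᵢ| < r*ᵢ(δ(Cᵢ))` for both of its parts by minimality, and summing contradicts
`r*(δ(C)) ≤ |C|`; so the circuits of `M_G` are exactly those of `M_{G₁}` and of `M_{G₂}`. -/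

theorem Quot.natCard_le_natCard_add_one {α : Type*} [Finite α] {r s : α → α → Prop} {u v : α}
    (hs : ∀ x y, s x y → r x y ∨ s(x, y) = s(u, v)) :
    Nat.card (Quot r) ≤ Nat.card (Quot s) + 1 := by
  classical
  let merge (a : Quot r) : Quot r := if a = Quot.mk r v then Quot.mk r u else a
  let ψ : Quot s → Quot r := Quot.lift (fun x => merge (Quot.mk r x)) fun x y hxy => by
    rcases hs x y hxy with h | h
    · rw [Quot.sound h]
    · rcases Sym2.eq_iff.mp h with ⟨rfl, rfl⟩ | ⟨rfl, rfl⟩ <;> simp [merge]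
  have hrange : {Quot.mk r v}ᶜ ⊆ Set.range ψ := by
    rintro a (ha : a ≠ _)
    induction a using Quot.ind with
    | _ x => exact ⟨Quot.mk s x, if_neg ha⟩
  have hpos : 0 < Nat.card (Quot r) := Nat.card_pos_iff.mpr ⟨⟨Quot.mk r v⟩, inferInstance⟩
  calc Nat.card (Quot r) = ({Quot.mk r v}ᶜ : Set (Quot r)).ncard + 1 := by
        rw [Set.ncard_compl, Set.ncard_singleton]
        omega
    _ ≤ (Set.range ψ).ncard + 1 := by gcongr; exact Set.toFinite _
    _ ≤ Nat.card (Quot s) + 1 := by gcongr; exact Finite.card_range_le ψ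

theorem Quot.natCard_sumLiftRel {α β : Type*} [Finite α] [Finite β]
    (r : α → α → Prop) (s : β → β → Prop) :
    Nat.card (Quot (Sum.LiftRel r s)) = Nat.card (Quot r) + Nat.card (Quot s) := by
  let e : Quot (Sum.LiftRel r s) ≃ Quot r ⊕ Quot s :=
    { toFun := Quot.lift (Sum.map (Quot.mk r) (Quot.mk s)) fun _ _ h => by
        cases h with
        | inl h => exact congrArg Sum.inl (Quot.sound h)
        | inr h => exact congrArg Sum.inr (Quot.sound h)
      invFun := Sum.elim
        (Quot.lift (fun a => Quot.mk _ (Sum.inl a)) fun _ _ h => Quot.sound (.inl h))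
        (Quot.lift (fun b => Quot.mk _ (Sum.inr b)) fun _ _ h => Quot.sound (.inr h))
      left_inv := by
        rintro ⟨a | b⟩ <;> rfl
      right_inv := by
        rintro (⟨⟨a⟩⟩ | ⟨⟨b⟩⟩) <;> rfl }
  rw [Nat.card_congr e, Nat.card_sum]

theorem Set.ncard_preimage_inl_add_ncard_preimage_inr {α β : Type*} [Finite α] [Finite β]
    (S : Set (α ⊕ β)) : (Sum.inl ⁻¹' S).ncard + (Sum.inr ⁻¹' S).ncard = S.ncard := by
  conv_rhs => rw [← Set.image_preimage_inl_union_image_preimage_inr S]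
  rw [Set.ncard_union_eq Set.disjoint_image_inl_image_inr,
    Set.ncard_image_of_injective _ Sum.inl_injective,
    Set.ncard_image_of_injective _ Sum.inr_injective]

namespace Sym2

variable {α β : Type*}

theorem map_inl_eq_mk_iff {p : Sym2 α} {x y : α ⊕ β} :
    p.map Sum.inl = s(x, y) ↔ ∃ a b, p = s(a, b) ∧ x = Sum.inl a ∧ y = Sum.inl b := by
  induction p using Sym2.ind with
  | _ c d => cases x <;> cases y <;> simp

theorem map_inr_eq_mk_iff {p : Sym2 β} {x y : α ⊕ β} :
    p.map Sum.inr = s(x, y) ↔ ∃ a b, p = s(a, b) ∧ x = Sum.inr a ∧ y = Sum.inr b := by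
  induction p using Sym2.ind with
  | _ c d => cases x <;> cases y <;> simp

end Sym2

namespace Multigraph

section Ranks

variable {V E : Type*} (G : Multigraph V E)

def Linked (B : Set E) (u v : V) : Prop := ∃ e ∈ B, G.ends e = s(u, v)

theorem numComponentsEdges_eq_natCard_quot (B : Set E) :
    G.numComponentsEdges B = Nat.card (Quot (G.Linked B)) := rfl

theorem numComponentsEdges_le_natCard [Finite V] (B : Set E) :
    G.numComponentsEdges B ≤ Nat.card V :=
  Nat.card_le_card_of_surjective _ Quot.mk_surjective

theorem numComponentsEdges_le_insert_add_one [Finite V] (e : E) (B : Set E) :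
    G.numComponentsEdges B ≤ G.numComponentsEdges (insert e B) + 1 := by
  obtain ⟨⟨u, v⟩, huv⟩ := Sym2.mk_surjective (G.ends e)
  refine Quot.natCard_le_natCard_add_one (u := u) (v := v) ?_
  rintro x y ⟨e', rfl | he', hx⟩
  · exact Or.inr (hx.symm.trans huv.symm)
  · exact Or.inl ⟨e', he', hx⟩

theorem numComponentsEdges_le_union_add_ncard [Finite V] (B D : Set E) (hD : D.Finite) :
    G.numComponentsEdges B ≤ G.numComponentsEdges (B ∪ D) + D.ncard := by
  induction D, hD using Set.Finite.induction_on with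
  | empty => simp
  | @insert e D he hD ih =>
    have := G.numComponentsEdges_le_insert_add_one e (B ∪ D)
    rw [Set.union_insert, Set.ncard_insert_of_notMem he hD]
    omega

theorem cycleRank_univ_le_ncard_add_cycleRank_compl [Finite V] [Finite E] (B : Set E) :
    G.cycleRank Set.univ ≤ B.ncard + G.cycleRank Bᶜ := by
  have h := G.numComponentsEdges_le_union_add_ncard Bᶜ B (Set.toFinite B)
  rw [Set.compl_union_self] at h
  have := G.numComponentsEdges_le_natCard Bᶜ
  unfold cycleRank
  omega

theorem bondRank_inc_empty : G.bondRank (G.inc ∅) = 0 := by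
  simp [bondRank, inc]

end Ranks

theorem isCircuitMG_image_iff {V E V' E' : Type*} {G : Multigraph V E} {G' : Multigraph V' E'}
    {f : V' → V} (hf : f.Injective)
    (hρ : ∀ C, G.bondRank (G.inc (f '' C)) = G'.bondRank (G'.inc C)) (C : Set V') :
    G.IsCircuitMG (f '' C) ↔ G'.IsCircuitMG C := by
  have hssubset : ∀ A ⊂ f '' C, ∃ C' ⊂ C, f '' C' = A := by
    intro A hA
    obtain ⟨C', hC'C, rfl⟩ := Set.subset_image_iff.mp hA.subset
    exact ⟨C', ⟨hC'C, fun h => hA.not_subset (Set.image_mono h)⟩, rfl⟩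
  simp only [IsCircuitMG, Set.image_nonempty, hρ, Set.ncard_image_of_injective _ hf]
  refine and_congr_right fun _ => and_congr_right fun _ =>
    ⟨fun h C' hC' hne => ?_, fun h A hA hne => ?_⟩
  · simpa only [hρ, Set.ncard_image_of_injective _ hf] using
      h (f '' C') (hf.image_strictMono hC') (hne.image f)
  · obtain ⟨C', hC', rfl⟩ := hssubset A hA
    simpa only [hρ, Set.ncard_image_of_injective _ hf] using h C' hC' hne.of_image

section DisjUnion

variable {V₁ E₁ V₂ E₂ : Type*} (G₁ : Multigraph V₁ E₁) (G₂ : Multigraph V₂ E₂)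

theorem linked_disjUnion (B : Set (E₁ ⊕ E₂)) :
    (G₁.disjUnion G₂).Linked B =
      Sum.LiftRel (G₁.Linked (Sum.inl ⁻¹' B)) (G₂.Linked (Sum.inr ⁻¹' B)) := by
  ext (x₁ | x₂) (y₁ | y₂) <;>
    simp [Linked, disjUnion, Sum.exists, Sym2.map_inl_eq_mk_iff, Sym2.map_inr_eq_mk_iff]

theorem preimage_inl_inc_disjUnion (A : Set (V₁ ⊕ V₂)) :
    Sum.inl ⁻¹' (G₁.disjUnion G₂).inc A = G₁.inc (Sum.inl ⁻¹' A) := by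
  ext e
  simp [inc, disjUnion, Sym2.mem_map]

theorem preimage_inr_inc_disjUnion (A : Set (V₁ ⊕ V₂)) :
    Sum.inr ⁻¹' (G₁.disjUnion G₂).inc A = G₂.inc (Sum.inr ⁻¹' A) := by
  ext e
  simp [inc, disjUnion, Sym2.mem_map]

theorem numComponentsEdges_disjUnion [Finite V₁] [Finite V₂] (B : Set (E₁ ⊕ E₂)) :
    (G₁.disjUnion G₂).numComponentsEdges B =
      G₁.numComponentsEdges (Sum.inl ⁻¹' B) + G₂.numComponentsEdges (Sum.inr ⁻¹' B) := by
  simp only [numComponentsEdges_eq_natCard_quot, linked_disjUnion, Quot.natCard_sumLiftRel]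

theorem cycleRank_disjUnion [Finite V₁] [Finite V₂] (B : Set (E₁ ⊕ E₂)) :
    (G₁.disjUnion G₂).cycleRank B =
      G₁.cycleRank (Sum.inl ⁻¹' B) + G₂.cycleRank (Sum.inr ⁻¹' B) := by
  have h₁ := G₁.numComponentsEdges_le_natCard (Sum.inl ⁻¹' B)
  have h₂ := G₂.numComponentsEdges_le_natCard (Sum.inr ⁻¹' B)
  simp only [cycleRank, numComponentsEdges_disjUnion, Nat.card_sum]
  omega

variable [Finite V₁] [Finite E₁] [Finite V₂] [Finite E₂]

theorem bondRank_disjUnion (B : Set (E₁ ⊕ E₂)) :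
    (G₁.disjUnion G₂).bondRank B =
      G₁.bondRank (Sum.inl ⁻¹' B) + G₂.bondRank (Sum.inr ⁻¹' B) := by
  -- these bounds keep the truncated subtractions in `bondRank` from truncating
  have h₁ := G₁.cycleRank_univ_le_ncard_add_cycleRank_compl (Sum.inl ⁻¹' B)
  have h₂ := G₂.cycleRank_univ_le_ncard_add_cycleRank_compl (Sum.inr ⁻¹' B)
  simp only [bondRank, cycleRank_disjUnion, ← Set.ncard_preimage_inl_add_ncard_preimage_inr B,
    Set.preimage_compl, Set.preimage_univ]
  omega

theorem bondRank_inc_disjUnion (A : Set (V₁ ⊕ V₂)) :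
    (G₁.disjUnion G₂).bondRank ((G₁.disjUnion G₂).inc A) =
      G₁.bondRank (G₁.inc (Sum.inl ⁻¹' A)) + G₂.bondRank (G₂.inc (Sum.inr ⁻¹' A)) := by
  rw [bondRank_disjUnion, preimage_inl_inc_disjUnion, preimage_inr_inc_disjUnion]

theorem bondRank_inc_disjUnion_image_inl (C : Set V₁) :
    (G₁.disjUnion G₂).bondRank ((G₁.disjUnion G₂).inc (Sum.inl '' C)) =
      G₁.bondRank (G₁.inc C) := by
  simp [bondRank_inc_disjUnion, Set.preimage_image_eq _ Sum.inl_injective, bondRank_inc_empty]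

theorem bondRank_inc_disjUnion_image_inr (C : Set V₂) :
    (G₁.disjUnion G₂).bondRank ((G₁.disjUnion G₂).inc (Sum.inr '' C)) =
      G₂.bondRank (G₂.inc C) := by
  simp [bondRank_inc_disjUnion, Set.preimage_image_eq _ Sum.inr_injective, bondRank_inc_empty]

theorem isCircuitMG_disjUnion_image_inl (C : Set V₁) :
    (G₁.disjUnion G₂).IsCircuitMG (Sum.inl '' C) ↔ G₁.IsCircuitMG C :=
  isCircuitMG_image_iff Sum.inl_injective (bondRank_inc_disjUnion_image_inl G₁ G₂) C

theorem isCircuitMG_disjUnion_image_inr (C : Set V₂) :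
    (G₁.disjUnion G₂).IsCircuitMG (Sum.inr '' C) ↔ G₂.IsCircuitMG C :=
  isCircuitMG_image_iff Sum.inr_injective (bondRank_inc_disjUnion_image_inr G₁ G₂) C

theorem IsCircuitMG.preimage_inl_eq_empty_or_preimage_inr_eq_empty {C : Set (V₁ ⊕ V₂)}
    (hC : (G₁.disjUnion G₂).IsCircuitMG C) : Sum.inl ⁻¹' C = ∅ ∨ Sum.inr ⁻¹' C = ∅ := by
  obtain ⟨-, hρ, hmin⟩ := hC
  by_contra! h
  obtain ⟨⟨a, ha⟩, ⟨b, hb⟩⟩ := h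
  have hC₁ : Sum.inl '' (Sum.inl ⁻¹' C) ⊂ C :=
    ⟨Set.image_preimage_subset _ _, fun hsub => by
      obtain ⟨_, -, h⟩ := hsub hb
      exact Sum.inl_ne_inr h⟩
  have hC₂ : Sum.inr '' (Sum.inr ⁻¹' C) ⊂ C :=
    ⟨Set.image_preimage_subset _ _, fun hsub => by
      obtain ⟨_, -, h⟩ := hsub ha
      exact Sum.inr_ne_inl h⟩
  have h₁ := hmin _ hC₁ ⟨_, Set.mem_image_of_mem _ ha⟩
  have h₂ := hmin _ hC₂ ⟨_, Set.mem_image_of_mem _ hb⟩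
  rw [bondRank_inc_disjUnion_image_inl, Set.ncard_image_of_injective _ Sum.inl_injective] at h₁
  rw [bondRank_inc_disjUnion_image_inr, Set.ncard_image_of_injective _ Sum.inr_injective] at h₂
  rw [bondRank_inc_disjUnion, ← Set.ncard_preimage_inl_add_ncard_preimage_inr C] at hρ
  omega

theorem depMG_disjUnion_iff (A : Set (V₁ ⊕ V₂)) :
    (G₁.disjUnion G₂).DepMG A ↔ G₁.DepMG (Sum.inl ⁻¹' A) ∨ G₂.DepMG (Sum.inr ⁻¹' A) := by
  constructor
  · rintro ⟨C, hCA, hC⟩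
    have hsplit := Set.image_preimage_inl_union_image_preimage_inr C
    rcases hC.preimage_inl_eq_empty_or_preimage_inr_eq_empty with h | h
    · rw [h, Set.image_empty, Set.empty_union] at hsplit
      rw [← hsplit, isCircuitMG_disjUnion_image_inr] at hC
      exact Or.inr ⟨_, Set.preimage_mono hCA, hC⟩
    · rw [h, Set.image_empty, Set.union_empty] at hsplit
      rw [← hsplit, isCircuitMG_disjUnion_image_inl] at hC
      exact Or.inl ⟨_, Set.preimage_mono hCA, hC⟩
  · rintro (⟨C, hCA, hC⟩ | ⟨C, hCA, hC⟩)
    · exact ⟨_, Set.image_subset_iff.mpr hCA, (isCircuitMG_disjUnion_image_inl G₁ G₂ C).mpr hC⟩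
    · exact ⟨_, Set.image_subset_iff.mpr hCA, (isCircuitMG_disjUnion_image_inr G₁ G₂ C).mpr hC⟩

end DisjUnion

end Multigraph

/-- If `G` is the disjoint union of `G₁` and `G₂`, then
`M_G = M_{G₁} ⊕ M_{G₂}`: a set is independent in `M_G` iff its parts in `V₁`
and `V₂` are independent in `M_{G₁}` and `M_{G₂}` respectively. -/
theorem graphCurveMatroid_disjUnion {V₁ E₁ V₂ E₂ : Type*}
    [Fintype V₁] [Fintype E₁] [Fintype V₂] [Fintype E₂]
    (G₁ : Multigraph V₁ E₁) (G₂ : Multigraph V₂ E₂) (A : Set (V₁ ⊕ V₂)) :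
    (G₁.disjUnion G₂).IndepMG A ↔
      G₁.IndepMG (Sum.inl ⁻¹' A) ∧ G₂.IndepMG (Sum.inr ⁻¹' A) := by
  simp only [Multigraph.IndepMG, Multigraph.depMG_disjUnion_iff, not_or]
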